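/- arXiv:2409.14621 — 7 statements merged into one kernel-verified Lean document; each statement's English description precedes it below -/
import Mathlib

section
/- For every positive integer n, the minimal domination number of the (2n+1)-dimensional hypercube satisfies γ_{2n+1} ≤ 2^n · γ_n. -/
/-!
A word of `Q_{2n+1}` is split as `(a, b, c)` with `a, b ∈ Q_n` and one extra bit `c`. From a
dominating set `Δ` of `Q_n` take all words `(x, x + d, ∑ᵢ xᵢ)` with `x ∈ Q_n`, `d ∈ Δ`; there are at
most `2^n |Δ|` of them. To reach `(a, b, c)`, pick `d ∈ Δ` within distance 1 of `a + b`. With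
`x = a` the middle block `a + d` is within distance 1 of `b`, which suffices if the parity bit is
right or `d = a + b`. Otherwise `v = d + (a + b)` is a unit vector, and `x = a + v` costs one step
in the first block, makes the middle block exactly `b` and flips the parity bit to `c`.
-/

open Finset Function

/-- A finite subset of the hypercube `Q_n = (ZMod 2)^n` is dominating if every point of the
hypercube is at Hamming distance at most 1 from some element of the subset. -/
def IsDominating {n : ℕ} (Δ : Finset (Fin n → ZMod 2)) : Prop :=
  ∀ y : Fin n → ZMod 2, ∃ x ∈ Δ, hammingDist x y ≤ 1

/-- The minimal domination number `γ_n` of the `n`-dimensional hypercube. -/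
noncomputable def gamma (n : ℕ) : ℕ :=
  sInf {k | ∃ Δ : Finset (Fin n → ZMod 2), IsDominating Δ ∧ Δ.card = k}

section Hamming

variable {ι κ α : Type*} [Fintype ι] [Fintype κ] [DecidableEq α]

theorem hammingDist_comp_equiv (e : κ ≃ ι) (f g : ι → α) :
    hammingDist (f ∘ e) (g ∘ e) = hammingDist f g := by
  simp only [hammingDist, card_filter]
  exact e.sum_comp fun i => if f i ≠ g i then 1 else 0

theorem hammingDist_sumElim (a c : ι → α) (b d : κ → α) :
    hammingDist (Sum.elim a b) (Sum.elim c d) = hammingDist a c + hammingDist b d := by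
  simp only [hammingDist, card_filter, Fintype.sum_sum_type, Sum.elim_inl, Sum.elim_inr]
  rfl

theorem hammingDist_const_unit_le_one (p q : α) :
    hammingDist (fun _ : Unit => p) (fun _ => q) ≤ 1 :=
  hammingDist_le_card_fintype.trans_eq Fintype.card_unit

end Hamming

section Parity

variable {ι : Type*} [Fintype ι]

theorem hammingDist_eq_hammingNorm_add (x y : ι → ZMod 2) :
    hammingDist x y = hammingNorm (x + y) := by
  rw [hammingDist_eq_hammingNorm]
  congr 2
  funext i
  exact ZMod.neg_eq_self_mod_two (x i)

theorem sum_eq_hammingNorm (v : ι → ZMod 2) : ∑ i, v i = (hammingNorm v : ZMod 2) := by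
  rw [hammingNorm, card_filter, Nat.cast_sum]
  refine sum_congr rfl fun i _ => ?_
  generalize v i = p
  revert p
  decide

def parityDoubling (x d : ι → ZMod 2) : ι ⊕ ι ⊕ Unit → ZMod 2 :=
  Sum.elim x (Sum.elim (x + d) fun _ => ∑ i, x i)

theorem hammingDist_parityDoubling (x d a b : ι → ZMod 2) (c : ZMod 2) :
    hammingDist (parityDoubling x d) (Sum.elim a (Sum.elim b fun _ => c)) =
      hammingDist x a + hammingDist (x + d) b +
        hammingDist (fun _ : Unit => ∑ i, x i) (fun _ => c) := by
  rw [parityDoubling, hammingDist_sumElim, hammingDist_sumElim, add_assoc]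

theorem exists_hammingDist_parityDoubling_le_one {a b d : ι → ZMod 2}
    (hd : hammingDist d (a + b) ≤ 1) (c : ZMod 2) :
    ∃ x, hammingDist (parityDoubling x d) (Sum.elim a (Sum.elim b fun _ => c)) ≤ 1 := by
  have hmiddle : hammingDist (a + d) b = hammingDist d (a + b) := by
    rw [hammingDist_eq_hammingNorm_add, hammingDist_eq_hammingNorm_add]
    abel_nf
  by_cases hdab : d = a + b
  · refine ⟨a, ?_⟩
    rw [hammingDist_parityDoubling, hammingDist_self, hmiddle, hdab, hammingDist_self]
    simpa using hammingDist_const_unit_le_one (∑ i, a i) c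
  by_cases hpar : ∑ i, a i = c
  · refine ⟨a, ?_⟩
    rw [hammingDist_parityDoubling, hammingDist_self, hmiddle, hpar, hammingDist_self]
    simpa using hd
  set v := d + (a + b) with hv
  have hnorm : hammingNorm v = 1 := by
    rw [← hammingDist_eq_hammingNorm_add]
    exact le_antisymm hd (hammingDist_pos.2 hdab)
  refine ⟨a + v, le_of_eq ?_⟩
  have hfirst : hammingDist (a + v) a = 1 := by
    rw [hammingDist_eq_hammingNorm_add, ← hnorm]
    congr 1
    funext i
    simp only [Pi.add_apply]
    grind
  have hsecond : a + v + d = b := by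
    funext i
    simp only [hv, Pi.add_apply]
    grind
  have hbit : ∑ i, (a + v) i = c := by
    simp only [Pi.add_apply, sum_add_distrib, sum_eq_hammingNorm v, hnorm, Nat.cast_one]
    revert hpar
    generalize ∑ i, a i = p
    revert p c
    decide
  rw [hammingDist_parityDoubling, hfirst, hsecond, hbit, hammingDist_self, hammingDist_self]

end Parity

theorem exists_isDominating_card_eq_gamma (n : ℕ) :
    ∃ Δ : Finset (Fin n → ZMod 2), IsDominating Δ ∧ Δ.card = gamma n :=
  Nat.sInf_mem (s := {k | ∃ Δ : Finset (Fin n → ZMod 2), IsDominating Δ ∧ Δ.card = k})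
    ⟨_, univ, fun y => ⟨y, mem_univ y, by simp⟩, rfl⟩

theorem gamma_le_card {n : ℕ} {Δ : Finset (Fin n → ZMod 2)} (hΔ : IsDominating Δ) :
    gamma n ≤ Δ.card :=
  Nat.sInf_le ⟨Δ, hΔ, rfl⟩

theorem IsDominating.image_parityDoubling {n m : ℕ} {Δ : Finset (Fin n → ZMod 2)}
    (hΔ : IsDominating Δ) (e : Fin n ⊕ Fin n ⊕ Unit ≃ Fin m) :
    IsDominating ((univ ×ˢ Δ).image fun p => parityDoubling p.1 p.2 ∘ e.symm) := by
  intro y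
  have hy : y ∘ e =
      Sum.elim (y ∘ e ∘ .inl) (Sum.elim (y ∘ e ∘ .inr ∘ .inl) fun _ => y (e (.inr (.inr ())))) := by
    funext i
    rcases i with i | i | ⟨⟩ <;> rfl
  obtain ⟨d, hdΔ, hd⟩ := hΔ (y ∘ e ∘ .inl + y ∘ e ∘ .inr ∘ .inl)
  obtain ⟨x, hx⟩ := exists_hammingDist_parityDoubling_le_one hd (y (e (.inr (.inr ()))))
  refine ⟨_, mem_image.2 ⟨(x, d), by simpa using hdΔ, rfl⟩, ?_⟩
  rwa [← hammingDist_comp_equiv e, comp_assoc, e.symm_comp_self, comp_id, hy]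

theorem stmt_0_general (n : ℕ) : gamma (2 * n + 1) ≤ 2 ^ n * gamma n := by
  obtain ⟨Δ, hΔ, hcard⟩ := exists_isDominating_card_eq_gamma n
  let e : Fin n ⊕ Fin n ⊕ Unit ≃ Fin (2 * n + 1) := Fintype.equivFinOfCardEq (by simp; ring)
  calc gamma (2 * n + 1) ≤ _ := gamma_le_card (hΔ.image_parityDoubling e)
    _ ≤ (univ ×ˢ Δ).card := card_image_le
    _ = 2 ^ n * gamma n := by simp [hcard]

/-- For every positive integer `n`, `γ_{2n+1} ≤ 2^n * γ_n`. -/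
theorem stmt_0 (n : ℕ) (hn : 0 < n) : gamma (2 * n + 1) ≤ 2 ^ n * gamma n :=
  stmt_0_general n
end

section
/- For every positive integer n, the minimal independent domination number satisfies γ^i_{2n+1} ≤ 2^n · γ^i_n. -/
section Helpers
open Finset

lemma hd_reindex {ι ι' β : Type*} [Fintype ι] [Fintype ι'] [DecidableEq β]
    (e : ι' ≃ ι) (x y : ι → β) : hammingDist (x ∘ e) (y ∘ e) = hammingDist x y := by
  unfold hammingDist
  rw [Finset.card_filter, Finset.card_filter]
  exact Fintype.sum_equiv e _ _ (fun i => rfl)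

lemma hd_sum {ι₁ ι₂ β : Type*} [Fintype ι₁] [Fintype ι₂] [DecidableEq β]
    (x y : ι₁ → β) (u v : ι₂ → β) :
    hammingDist (Sum.elim x u) (Sum.elim y v) = hammingDist x y + hammingDist u v := by
  unfold hammingDist
  rw [Finset.card_filter, Finset.card_filter, Finset.card_filter, Fintype.sum_sum_type]
  rfl

lemma hd_const (c c' : ZMod 2) :
    hammingDist (fun _ : Fin 1 => c) (fun _ : Fin 1 => c') = if c = c' then 0 else 1 := by
  split_ifs with h <;> simp [hammingDist, h, Finset.filter_eq_empty_iff]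

lemma hd_add_left {n : ℕ} (u x y : Fin n → ZMod 2) :
    hammingDist (u + x) (u + y) = hammingDist x y :=
  hammingDist_comp (fun i b => u i + b) (fun i => add_right_injective (u i))

lemma hd_single {n : ℕ} (w : Fin n → ZMod 2) (i : Fin n) :
    hammingDist (w + Pi.single i 1) w = 1 := by
  have hz : ∀ a : ZMod 2, a + 1 ≠ a := by decide
  unfold hammingDist
  have hfi : (Finset.univ.filter fun j => (w + Pi.single i 1 : Fin n → ZMod 2) j ≠ w j) = {i} := by
    ext j
    by_cases h : j = i <;> simp [h, Pi.single_apply, hz]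
  rw [hfi]
  simp

lemma hd_one {n : ℕ} {v w : Fin n → ZMod 2} (h : hammingDist v w = 1) :
    ∃ i, v = w + Pi.single i 1 := by
  have hz : ∀ a b : ZMod 2, a ≠ b → a = b + 1 := by decide
  obtain ⟨i, hi⟩ := Finset.card_eq_one.mp h
  refine ⟨i, funext fun j => ?_⟩
  by_cases hj : j = i
  · subst hj
    have : v j ≠ w j := by
      have : j ∈ Finset.univ.filter fun k => v k ≠ w k := by rw [hi]; simp
      simpa using this
    simp [Pi.single_apply, hz _ _ this]
  · have : v j = w j := by
      by_contra hne
      have : j ∈ Finset.univ.filter fun k => v k ≠ w k := by simp [hne]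
      rw [hi] at this; simp at this; exact hj this
    simp [Pi.single_apply, hj, this]

lemma parity_hd {n : ℕ} (x y : Fin n → ZMod 2) :
    ((hammingDist x y : ℕ) : ZMod 2) = (∑ i, x i) + ∑ i, y i := by
  have key : ∀ a b : ZMod 2, (if a ≠ b then (1 : ZMod 2) else 0) = a + b := by decide
  rw [hammingDist, Finset.card_filter, Nat.cast_sum, ← Finset.sum_add_distrib]
  refine Finset.sum_congr rfl fun i _ => ?_
  rw [← key]
  split_ifs <;> simp

def myEmb (n : ℕ) : (Fin n ⊕ (Fin n ⊕ Fin 1)) ≃ Fin (2 * n + 1) :=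
  ((Equiv.refl (Fin n)).sumCongr finSumFinEquiv).trans
    (finSumFinEquiv.trans (finCongr (by ring)))

def myF (n : ℕ) (a b : Fin n → ZMod 2) (c : ZMod 2) : Fin (2 * n + 1) → ZMod 2 :=
  (Sum.elim a (Sum.elim b fun _ => c)) ∘ (myEmb n).symm

lemma hd_F (n : ℕ) (a b a' b' : Fin n → ZMod 2) (c c' : ZMod 2) :
    hammingDist (myF n a b c) (myF n a' b' c') =
      hammingDist a a' + hammingDist b b' + (if c = c' then 0 else 1) := by
  unfold myF
  rw [show ((Sum.elim a (Sum.elim b fun _ => c)) ∘ (myEmb n).symm) =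
    ((Sum.elim a (Sum.elim b fun _ => c)) ∘ ((myEmb n).symm : Fin (2*n+1) ≃ _)) from rfl]
  rw [hd_reindex (myEmb n).symm, hd_sum, hd_sum, hd_const]
  ring

lemma F_inj {n : ℕ} {a b a' b' : Fin n → ZMod 2} {c c' : ZMod 2}
    (h : myF n a b c = myF n a' b' c') : a = a' ∧ b = b' ∧ c = c' := by
  have h0 : hammingDist (myF n a b c) (myF n a' b' c') = 0 := by rw [h, hammingDist_self]
  rw [hd_F] at h0
  have h1 : hammingDist a a' = 0 ∧ hammingDist b b' = 0 ∧ (if c = c' then 0 else 1) = 0 := by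
    constructor; · omega
    constructor; · omega
    omega
  refine ⟨hammingDist_eq_zero.mp h1.1, hammingDist_eq_zero.mp h1.2.1, ?_⟩
  by_contra hne
  simp [hne] at h1

lemma F_surj {n : ℕ} (y : Fin (2 * n + 1) → ZMod 2) :
    y = myF n (fun i => y (myEmb n (Sum.inl i))) (fun i => y (myEmb n (Sum.inr (Sum.inl i))))
      (y (myEmb n (Sum.inr (Sum.inr 0)))) := by
  funext j
  rw [show j = myEmb n ((myEmb n).symm j) from ((myEmb n).apply_symm_apply j).symm]
  generalize (myEmb n).symm j = s
  rcases s with i | i | k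
  · simp [myF]
  · simp [myF]
  · simp [myF, Subsingleton.elim k 0]

lemma gamma_nonempty (n : ℕ) (hn : 0 < n) :
    Set.Nonempty {k | ∃ Δ : Finset (Fin n → ZMod 2),
      (∀ y : Fin n → ZMod 2, ∃ x ∈ Δ, hammingDist x y ≤ 1) ∧
      (∀ x ∈ Δ, ∀ y ∈ Δ, x ≠ y → hammingDist x y ≠ 1) ∧ Δ.card = k} := by
  classical
  set E : Finset (Fin n → ZMod 2) := Finset.univ.filter (fun x => ∑ i, x i = 0) with hE
  refine ⟨E.card, E, ?_, ?_, rfl⟩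
  · intro y
    by_cases h : ∑ i, y i = 0
    · exact ⟨y, by simp [hE, h], by simp⟩
    · refine ⟨y + Pi.single ⟨0, hn⟩ 1, ?_, ?_⟩
      · have h1 : ∑ i, y i = 1 := by
          have : ∀ p : ZMod 2, p ≠ 0 → p = 1 := by decide
          exact this _ h
        have h2 : ∑ i, (y + Pi.single ⟨0, hn⟩ 1 : Fin n → ZMod 2) i = 0 := by
          have h3 : ∑ i, (y + Pi.single ⟨0, hn⟩ 1 : Fin n → ZMod 2) i
              = (∑ i, y i) + ∑ i, (Pi.single ⟨0, hn⟩ 1 : Fin n → ZMod 2) i :=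
            Finset.sum_add_distrib
          rw [h3, h1, Finset.sum_pi_single']
          simp only [Finset.mem_univ, if_true]
          decide
        simpa [hE] using h2
      · exact le_of_eq (hd_single y ⟨0, hn⟩)
  · intro x hx y hy _ hd1
    have px : ∑ i, x i = 0 := by simpa [hE] using hx
    have py : ∑ i, y i = 0 := by simpa [hE] using hy
    have := parity_hd x y
    rw [hd1, px, py] at this
    simp at this

end Helpers



/-- A subset of the hypercube is independent if no two distinct elements of it are at
Hamming distance 1 (i.e. adjacent). -/
def IsIndependentSet {n : ℕ} (Δ : Finset (Fin n → ZMod 2)) : Prop :=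
  ∀ x ∈ Δ, ∀ y ∈ Δ, x ≠ y → hammingDist x y ≠ 1

/-- The minimal independent domination number `γ^i_n` of the `n`-dimensional hypercube. -/
noncomputable def gammaI (n : ℕ) : ℕ :=
  sInf {k | ∃ Δ : Finset (Fin n → ZMod 2), IsDominating Δ ∧ IsIndependentSet Δ ∧ Δ.card = k}

/-- For every positive integer `n`, `γ^i_{2n+1} ≤ 2^n * γ^i_n`. -/
theorem stmt_1 (n : ℕ) (hn : 0 < n) : gammaI (2 * n + 1) ≤ 2 ^ n * gammaI n := by
  classical
  have hne := gamma_nonempty n hn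
  have hmem : gammaI n ∈ {k | ∃ Δ : Finset (Fin n → ZMod 2),
      IsDominating Δ ∧ IsIndependentSet Δ ∧ Δ.card = k} := Nat.sInf_mem hne
  obtain ⟨Δ, hdom, hind, hcard⟩ := hmem
  set π : (Fin n → ZMod 2) → ZMod 2 := fun u => ∑ i, u i with hπ
  set g : (Fin n → ZMod 2) × (Fin n → ZMod 2) → (Fin (2 * n + 1) → ZMod 2) :=
    fun p => myF n p.1 (p.1 + p.2) (π p.1) with hg
  have hginj : Function.Injective g := by
    intro p q hpq
    obtain ⟨h1, h2, _⟩ := F_inj hpq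
    have : p.2 = q.2 := by
      have := h2; rw [h1] at this; exact add_left_cancel this
    exact Prod.ext h1 this
  set Δ' : Finset (Fin (2 * n + 1) → ZMod 2) := (Finset.univ ×ˢ Δ).image g with hΔ'
  have hmemg : ∀ u, ∀ v ∈ Δ, g (u, v) ∈ Δ' := fun u v hv =>
    Finset.mem_image_of_mem g (Finset.mem_product.mpr ⟨Finset.mem_univ u, hv⟩)
  have hcard' : Δ'.card = 2 ^ n * gammaI n := by
    rw [hΔ', Finset.card_image_of_injective _ hginj, Finset.card_product, hcard,
      Finset.card_univ]
    congr 1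
    simp [ZMod.card]
  -- distance formula between two generators
  have hdist : ∀ u v u' v', hammingDist (g (u, v)) (g (u', v')) =
      hammingDist u u' + hammingDist (u + v) (u' + v') + (if π u = π u' then 0 else 1) :=
    fun u v u' v' => hd_F n u (u + v) u' (u' + v') (π u) (π u')
  have char2 : ∀ m (x : Fin m → ZMod 2), x + x = 0 := by
    intro m x; funext i
    show x i + x i = 0
    generalize x i = p; revert p; decide
  have hdom' : IsDominating Δ' := by
    intro y
    set a : Fin n → ZMod 2 := fun i => y (myEmb n (Sum.inl i)) with ha
    set b : Fin n → ZMod 2 := fun i => y (myEmb n (Sum.inr (Sum.inl i))) with hb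
    set c : ZMod 2 := y (myEmb n (Sum.inr (Sum.inr 0))) with hc
    have hy : y = myF n a b c := F_surj y
    obtain ⟨v, hv, hvd⟩ := hdom (a + b)
    have hdF : ∀ u w, hammingDist (g (u, w)) y =
        hammingDist u a + hammingDist (u + w) b + (if π u = c then 0 else 1) := by
      intro u w; rw [hy]; exact hd_F n u (u + w) a b (π u) c
    obtain h0 | h1 : hammingDist v (a + b) = 0 ∨ hammingDist v (a + b) = 1 := by omega
    · have hv0 : v = a + b := hammingDist_eq_zero.mp h0
      refine ⟨g (a, v), hmemg a v hv, ?_⟩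
      rw [hdF]
      have : a + v = b := by rw [hv0, ← add_assoc, char2 n a, zero_add]
      rw [this, hammingDist_self, hammingDist_self]
      split_ifs <;> omega
    · obtain ⟨i, hvi⟩ := hd_one h1
      by_cases hcc : π a = c
      · refine ⟨g (a, v), hmemg a v hv, ?_⟩
        rw [hdF, hammingDist_self, if_pos hcc]
        have : a + v = b + Pi.single i 1 := by
          rw [hvi, ← add_assoc, ← add_assoc, char2 n a, zero_add]
        rw [this, hd_single]
      · refine ⟨g (a + Pi.single i 1, v), hmemg _ v hv, ?_⟩
        rw [hdF, hd_single]
        have h2 : a + Pi.single i 1 + v = b := by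
          rw [hvi]
          have : a + Pi.single i 1 + (a + b + Pi.single i 1)
              = (a + a) + (Pi.single i 1 + Pi.single i 1) + b := by ring
          rw [this, char2 n a, char2 n (Pi.single i 1), zero_add, zero_add]
        rw [h2, hammingDist_self]
        have hπu : π (a + Pi.single i 1) = π a + 1 := by
          rw [hπ]
          show ∑ j, (a + Pi.single i 1 : Fin n → ZMod 2) j = _
          simp only [Pi.add_apply]
          rw [Finset.sum_add_distrib, Finset.sum_pi_single']
          simp
        have : π (a + Pi.single i 1) = c := by
          rw [hπu]
          have : ∀ p q : ZMod 2, p ≠ q → p + 1 = q := by decide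
          exact this _ _ hcc
        rw [if_pos this]
  have hind' : IsIndependentSet Δ' := by
    intro x hx z hz hxz
    obtain ⟨p, hp, rfl⟩ := Finset.mem_image.mp hx
    obtain ⟨q, hq, rfl⟩ := Finset.mem_image.mp hz
    obtain ⟨u, v⟩ := p; obtain ⟨u', v'⟩ := q
    have hvΔ : v ∈ Δ := (Finset.mem_product.mp hp).2
    have hv'Δ : v' ∈ Δ := (Finset.mem_product.mp hq).2
    rw [hdist]
    by_cases hu : u = u'
    · subst hu
      have hvv' : v ≠ v' := fun h => hxz (by rw [h])
      rw [hammingDist_self, hd_add_left, if_pos rfl]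
      have := hind v hvΔ v' hv'Δ hvv'
      omega
    · have hpos : 0 < hammingDist u u' := hammingDist_pos.mpr hu
      by_cases h2 : hammingDist u u' = 1
      · have hpar : π u ≠ π u' := by
          have := parity_hd u u'
          rw [h2] at this
          intro he
          have he' : (∑ i, u i) = ∑ i, u' i := he
          rw [he'] at this
          have h4 : ∀ p : ZMod 2, ((1:ℕ):ZMod 2) ≠ p + p := by decide
          exact h4 _ this
        rw [if_neg hpar]
        omega
      · have : 2 ≤ hammingDist u u' := by omega
        split_ifs <;> omega
  calc gammaI (2 * n + 1) ≤ Δ'.card :=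
        Nat.sInf_le ⟨Δ', hdom', hind', rfl⟩
    _ = 2 ^ n * gammaI n := hcard'
end

section
/- For every integer a ≥ 1, the minimal domination number of the hypercube of dimension 2^a − 1 satisfies γ_{2^a − 1} = 2^(2^a − 1 − a). -/
open Finset

section HammingBall

variable {ι : Type*} [Fintype ι] [DecidableEq ι]

lemma eq_zero_or_exists_eq_single_of_hammingNorm_le_one {d : ι → ZMod 2}
    (hd : hammingNorm d ≤ 1) : d = 0 ∨ ∃ i, d = Pi.single i 1 := by
  rcases Nat.le_one_iff_eq_zero_or_eq_one.mp hd with h | h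
  · exact .inl (hammingNorm_eq_zero.mp h)
  · obtain ⟨i, hi⟩ := card_eq_one.mp h
    refine .inr ⟨i, funext fun j => ?_⟩
    have hj : d j ≠ 0 ↔ j = i := by simpa using congrArg (j ∈ ·) hi
    by_cases hji : j = i
    · subst hji
      simpa using (show ∀ u : ZMod 2, u ≠ 0 → u = 1 by decide) _ (hj.mpr rfl)
    · simpa [Pi.single_eq_of_ne hji] using mt hj.mp hji

lemma card_hammingDist_le_one_le (x : ι → ZMod 2) :
    #{y | hammingDist x y ≤ 1} ≤ Fintype.card ι + 1 := by
  let neighbour : Option ι → ι → ZMod 2 := fun o => x + o.elim 0 (Pi.single · 1)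
  calc #{y | hammingDist x y ≤ 1} ≤ #(univ.image neighbour) := card_le_card ?_
    _ ≤ Fintype.card (Option ι) := card_image_le
    _ = Fintype.card ι + 1 := Fintype.card_option
  intro y hy
  rw [mem_filter, hammingDist_eq_hammingNorm] at hy
  rcases eq_zero_or_exists_eq_single_of_hammingNorm_le_one hy.2 with h | ⟨i, h⟩
  · exact mem_image.mpr ⟨none, mem_univ _, by simp [neighbour, neg_add_eq_zero.mp h]⟩
  · exact mem_image.mpr ⟨some i, mem_univ _, by simp [neighbour, ← h]⟩

end HammingBall

lemma IsDominating.two_pow_le_card_mul {n : ℕ} {Δ : Finset (Fin n → ZMod 2)}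
    (hΔ : IsDominating Δ) : 2 ^ n ≤ #Δ * (n + 1) := by
  have hcover : (univ : Finset (Fin n → ZMod 2)) ⊆
      Δ.biUnion fun x => {y | hammingDist x y ≤ 1} := by
    intro y _
    obtain ⟨x, hx, hxy⟩ := hΔ y
    exact mem_biUnion.mpr ⟨x, hx, by simpa using hxy⟩
  calc 2 ^ n = #(univ : Finset (Fin n → ZMod 2)) := by simp
    _ ≤ #(Δ.biUnion fun x => {y | hammingDist x y ≤ 1}) := card_le_card hcover
    _ ≤ ∑ x ∈ Δ, #{y | hammingDist x y ≤ 1} := card_biUnion_le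
    _ ≤ ∑ _x ∈ Δ, (n + 1) := sum_le_sum fun x _ => by
      simpa using card_hammingDist_le_one_le x
    _ = #Δ * (n + 1) := by rw [sum_const, smul_eq_mul]

section Syndrome

variable {n : ℕ} {V : Type*} [AddCommGroup V] [DecidableEq V] (H : (Fin n → ZMod 2) →+ V)

lemma isDominating_filter_eq_zero (hH : ∀ w ≠ 0, ∃ i, H (Pi.single i 1) = w) :
    IsDominating ({x | H x = 0} : Finset (Fin n → ZMod 2)) := by
  intro y
  by_cases hy : H y = 0
  · exact ⟨y, by simpa using hy, by simp⟩
  obtain ⟨i, hi⟩ := hH (H y) hy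
  refine ⟨y + Pi.single i 1, ?_, ?_⟩
  · have hyy : y + y = 0 := funext fun j => CharTwo.add_self_eq_zero (y j)
    rw [mem_filter, map_add, hi, ← map_add, hyy, map_zero]
    exact ⟨mem_univ _, rfl⟩
  · rw [hammingDist_comm, hammingDist_eq_hammingNorm, neg_add_cancel_left]
    simp [hammingNorm, Pi.single_apply, filter_eq']

lemma card_filter_eq_zero_mul_card (hH : Function.Surjective H) :
    #{x | H x = 0} * Nat.card V = 2 ^ n := by
  have h := H.ker.card_mul_index
  rw [AddSubgroup.index_ker H, AddMonoidHom.range_eq_top.mpr hH, AddSubgroup.card_top,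
    Nat.card_eq_fintype_card (α := H.ker), Fintype.card_subtype] at h
  simpa using h

end Syndrome

lemma two_pow_sub_mul_two_pow (a : ℕ) : 2 ^ (2 ^ a - 1 - a) * 2 ^ a = 2 ^ (2 ^ a - 1) :=
  pow_sub_mul_pow 2 (Nat.le_sub_one_of_lt a.lt_two_pow_self)

lemma exists_addMonoidHom_columns_cover_nonzero (a : ℕ) :
    ∃ H : (Fin (2 ^ a - 1) → ZMod 2) →+ (Fin a → ZMod 2),
      ∀ w ≠ 0, ∃ i, H (Pi.single i 1) = w := by
  have hcard : Fintype.card {w : Fin a → ZMod 2 // w ≠ 0} = 2 ^ a - 1 := by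
    simp [Fintype.card_subtype_compl]
  let e := (Fintype.equivFinOfCardEq hcard).symm
  refine ⟨(Fintype.linearCombination (ZMod 2) fun i => (e i : Fin a → ZMod 2)).toAddMonoidHom,
    fun w hw => ⟨e.symm ⟨w, hw⟩, ?_⟩⟩
  simp [Fintype.linearCombination_apply_single]

lemma exists_isDominating_card_eq_two_pow (a : ℕ) :
    ∃ Δ : Finset (Fin (2 ^ a - 1) → ZMod 2),
      IsDominating Δ ∧ #Δ = 2 ^ (2 ^ a - 1 - a) := by
  obtain ⟨H, hH⟩ := exists_addMonoidHom_columns_cover_nonzero a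
  have hsurj : Function.Surjective H := fun w => by
    by_cases hw : w = 0
    · exact ⟨0, by simp [hw]⟩
    · exact (hH w hw).elim fun _ hi => ⟨_, hi⟩
  refine ⟨_, isDominating_filter_eq_zero H hH, ?_⟩
  have h := card_filter_eq_zero_mul_card H hsurj
  rw [Nat.card_eq_fintype_card, Fintype.card_fun, ZMod.card, Fintype.card_fin,
    ← two_pow_sub_mul_two_pow] at h
  exact Nat.eq_of_mul_eq_mul_right (by positivity) h

theorem stmt_3_general (a : ℕ) : gamma (2 ^ a - 1) = 2 ^ (2 ^ a - 1 - a) := by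
  obtain ⟨Δ, hΔ, hcard⟩ := exists_isDominating_card_eq_two_pow a
  refine le_antisymm (Nat.sInf_le ⟨Δ, hΔ, hcard⟩) (le_csInf ⟨_, Δ, hΔ, hcard⟩ ?_)
  rintro _ ⟨Δ', hΔ', rfl⟩
  have h := hΔ'.two_pow_le_card_mul
  rw [Nat.sub_add_cancel Nat.one_le_two_pow, ← two_pow_sub_mul_two_pow] at h
  exact Nat.le_of_mul_le_mul_right h (by positivity)

/-- For every integer `a ≥ 1`, `γ_{2^a - 1} = 2^(2^a - 1 - a)`. -/
theorem stmt_3 (a : ℕ) (ha : 1 ≤ a) : gamma (2 ^ a - 1) = 2 ^ (2 ^ a - 1 - a) :=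
  stmt_3_general a
end

section
/- For every integer a ≥ 1, the minimal domination number of the hypercube of dimension 2^a satisfies γ_{2^a} = 2^(2^a − a). -/
/-!
Let `μ x` be the number of points of a dominating set `Δ ⊆ Q_n` in the closed unit ball `B x`.
Two distinct unit balls meet in an even number of points, so for `v ∉ Δ` the sum of `μ` over
`B v` is even; as it has `n + 1` terms, all `≥ 1`, it is at least `n + 2` when `n` is even.
Summing over `v ∉ Δ` and double counting, with `μ (n + 1 - μ) ≤ (n - 2) μ + 2` and
`∑ μ = (n + 1) |Δ|`, gives `2 ^ n ≤ n |Δ|`. For `n = 2 ^ a` the bound is attained by the Hamming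
code, the kernel of the linear map `(ZMod 2)^n → (ZMod 2)^a` sending the unit vectors onto
`(ZMod 2)^a`.
-/

open Finset

namespace Hypercube

variable {ι : Type*} [Fintype ι]

lemma hammingDist_reflect {β : ι → Type*} [∀ i, AddCommGroup (β i)] [∀ i, DecidableEq (β i)]
    (x y w : ∀ i, β i) : hammingDist x (x + y - w) = hammingDist w y := by
  rw [hammingDist_eq_hammingNorm, hammingDist_eq_hammingNorm]
  congr 1
  abel

variable [DecidableEq ι]

def ball (x : ι → ZMod 2) : Finset (ι → ZMod 2) := {y | hammingDist x y ≤ 1}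

lemma mem_ball {x y : ι → ZMod 2} : y ∈ ball x ↔ hammingDist x y ≤ 1 := by
  simp [ball]

lemma mem_ball_comm {x y : ι → ZMod 2} : y ∈ ball x ↔ x ∈ ball y := by
  simp only [mem_ball, hammingDist_comm]

lemma hammingDist_add_single (x : ι → ZMod 2) (i : ι) :
    hammingDist x (x + Pi.single i 1) = 1 := by
  rw [hammingDist_eq_hammingNorm, neg_add_cancel_left, hammingNorm, card_eq_one]
  exact ⟨i, by ext j; by_cases h : j = i <;> simp [h]⟩

lemma exists_eq_add_single_of_hammingDist_eq_one {x y : ι → ZMod 2} (h : hammingDist x y = 1) :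
    ∃ i, y = x + Pi.single i 1 := by
  obtain ⟨i, hi⟩ := card_eq_one.1 h
  have hdiff : ∀ j, x j ≠ y j ↔ j = i := fun j => by simpa using congrArg (j ∈ ·) hi
  refine ⟨i, funext fun j => ?_⟩
  by_cases hj : j = i
  · subst hj
    have : ∀ a b : ZMod 2, a ≠ b → b = a + 1 := by decide
    simpa using this _ _ ((hdiff j).2 rfl)
  · simpa [hj] using (not_not.1 (mt (hdiff j).1 hj)).symm

lemma ball_eq_insert_image (x : ι → ZMod 2) :
    ball x = insert x (univ.image fun i => x + Pi.single i 1) := by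
  ext y
  simp only [mem_ball, mem_insert, mem_image, mem_univ, true_and]
  constructor
  · intro h
    interval_cases hd : hammingDist x y
    · exact Or.inl (hammingDist_eq_zero.1 hd).symm
    · obtain ⟨i, rfl⟩ := exists_eq_add_single_of_hammingDist_eq_one hd
      exact Or.inr ⟨i, rfl⟩
  · rintro (rfl | ⟨i, rfl⟩)
    · simp
    · rw [hammingDist_add_single]

lemma card_ball (x : ι → ZMod 2) : #(ball x) = Fintype.card ι + 1 := by
  have hinj : Function.Injective fun i : ι => x + Pi.single i (1 : ZMod 2) :=
    fun i j h => by_contra fun hij => by simpa [hij] using congrFun h i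
  rw [ball_eq_insert_image, card_insert_of_notMem, card_image_of_injective _ hinj, card_univ]
  simp [Pi.single_eq_zero_iff]

-- The reflection `w ↦ x + y - w` swaps the distances to `x` and `y` and has no fixed point.
lemma even_card_ball_inter_ball {x y : ι → ZMod 2} (hxy : x ≠ y) :
    Even #(ball x ∩ ball y) := by
  rw [← ZMod.natCast_eq_zero_iff_even, card_eq_sum_ones, Nat.cast_sum, Nat.cast_one]
  refine sum_involution (fun w _ => x + y - w) (fun _ _ => by decide) (fun w _ _ h => hxy ?_)
    (fun w hw => ?_) (fun w _ => sub_sub_cancel _ _)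
  · have : ∀ a b c : ZMod 2, c = a + b - c → a = b := by decide
    exact funext fun j => this _ _ _ (congrFun h j).symm
  · have hyx : x + y - w = y + x - w := by rw [add_comm]
    simp only [mem_inter, mem_ball] at hw ⊢
    rw [hammingDist_reflect, hyx, hammingDist_reflect, hammingDist_comm w, hammingDist_comm w]
    exact hw.symm

lemma sum_card_ball_inter_comm (A S : Finset (ι → ZMod 2)) :
    ∑ x ∈ A, #(ball x ∩ S) = ∑ c ∈ S, #(ball c ∩ A) := by
  simp only [card_eq_sum_ones]
  exact sum_comm' fun x c => by simp only [mem_inter, mem_ball_comm (x := x)]; tauto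

lemma sum_sum_ball {M : Type*} [AddCommMonoid M] (S : Finset (ι → ZMod 2))
    (f : (ι → ZMod 2) → M) : ∑ v ∈ S, ∑ x ∈ ball v, f x = ∑ x, #(ball x ∩ S) • f x := by
  simp only [← sum_const]
  exact sum_comm' fun v x => by simp only [mem_inter, mem_ball_comm (x := v), mem_univ]; tauto

lemma even_sum_card_ball_inter {S : Finset (ι → ZMod 2)} {v : ι → ZMod 2} (hv : v ∉ S) :
    Even (∑ x ∈ ball v, #(ball x ∩ S)) := by
  rw [sum_card_ball_inter_comm]
  exact even_sum _ fun c hc => by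
    rw [inter_comm]; exact even_card_ball_inter_ball (ne_of_mem_of_not_mem hc hv).symm

end Hypercube

open Hypercube

section Domination

variable {n : ℕ}

lemma IsDominating.nonempty_ball_inter {Δ : Finset (Fin n → ZMod 2)} (hΔ : IsDominating Δ)
    (y : Fin n → ZMod 2) : (ball y ∩ Δ).Nonempty := by
  obtain ⟨c, hc, hcy⟩ := hΔ y
  exact ⟨c, mem_inter.2 ⟨mem_ball.2 (hammingDist_comm c y ▸ hcy), hc⟩⟩

lemma IsDominating.add_two_le_sum_card_ball_inter {Δ : Finset (Fin n → ZMod 2)}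
    (hΔ : IsDominating Δ) (hn : Even n) {v : Fin n → ZMod 2} (hv : v ∉ Δ) :
    n + 2 ≤ ∑ x ∈ ball v, #(ball x ∩ Δ) := by
  have hle : n + 1 ≤ ∑ x ∈ ball v, #(ball x ∩ Δ) := by
    calc n + 1 = ∑ _x ∈ ball v, 1 := by simp [card_ball]
      _ ≤ _ := sum_le_sum fun x _ => (hΔ.nonempty_ball_inter x).card_pos
  have heven := even_sum_card_ball_inter hv
  rcases hle.lt_or_eq with hlt | heq
  · exact hlt
  · rw [← heq] at heven
    exact absurd heven (by simpa [Nat.even_add_one] using hn)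

theorem IsDominating.two_pow_le_mul_card {Δ : Finset (Fin n → ZMod 2)} (hΔ : IsDominating Δ)
    (hn : Even n) (hn0 : n ≠ 0) : 2 ^ n ≤ n * #Δ := by
  set μ : (Fin n → ZMod 2) → ℕ := fun x => #(ball x ∩ Δ)
  have hμ_sum : ∑ x, μ x = (n + 1) * #Δ := by
    refine (sum_card_ball_inter_comm univ Δ).trans ?_
    simp [card_ball, mul_comm]
  have hμ_compl (x) : μ x + #(ball x ∩ Δᶜ) = n + 1 := by
    rw [← sdiff_eq_inter_compl, card_inter_add_card_sdiff, card_ball, Fintype.card_fin]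
  have hpointwise (x) : #(ball x ∩ Δᶜ) * μ x + 2 * μ x ≤ n * μ x + 2 := by
    -- `(μ - 1)(μ - 2) ≥ 0`
    have h := hμ_compl x
    generalize μ x = m, #(ball x ∩ Δᶜ) = q at h ⊢
    obtain rfl : n = m + q - 1 := by omega
    rcases m with _ | k
    · simp
    · rw [show k + 1 + q - 1 = k + q by omega]
      nlinarith [Nat.le_mul_self k]
  have hcompl : (n + 2) * #Δᶜ ≤ ∑ x, #(ball x ∩ Δᶜ) * μ x := by
    calc (n + 2) * #Δᶜ = ∑ _v ∈ Δᶜ, (n + 2) := by rw [sum_const, smul_eq_mul, mul_comm]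
      _ ≤ ∑ v ∈ Δᶜ, ∑ x ∈ ball v, μ x :=
          sum_le_sum fun v hv => hΔ.add_two_le_sum_card_ball_inter hn (mem_compl.1 hv)
      _ = _ := sum_sum_ball _ _
  have hsum := sum_le_sum fun x (_ : x ∈ univ) => hpointwise x
  rw [sum_add_distrib, sum_add_distrib, ← mul_sum, ← mul_sum, sum_const, card_univ, hμ_sum] at hsum
  have hcard : #Δᶜ + #Δ = 2 ^ n := by
    rw [card_compl, Nat.sub_add_cancel (card_le_univ Δ)]; simp
  simp only [Fintype.card_fun, ZMod.card, Fintype.card_fin] at hsum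
  rw [← hcard] at hsum ⊢
  refine Nat.le_of_mul_le_mul_left ?_ (Nat.pos_of_ne_zero hn0)
  simp only [smul_eq_mul] at hsum
  nlinarith

variable {W : Type*} [AddCommGroup W] [Module (ZMod 2) W] [DecidableEq W] {e : Fin n → W}

lemma isDominating_linearCombination_eq_zero (he : Function.Surjective e) :
    IsDominating {x | Fintype.linearCombination (ZMod 2) e x = 0} := by
  intro y
  obtain ⟨i, hi⟩ := he (Fintype.linearCombination (ZMod 2) e y)
  refine ⟨y + Pi.single i 1, ?_, ?_⟩
  · simp [hi, ZModModule.add_self]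
  · rw [hammingDist_comm, hammingDist_add_single]

lemma card_linearCombination_eq_zero_mul_card [Fintype W] (he : Function.Surjective e) :
    #{x | Fintype.linearCombination (ZMod 2) e x = 0} * Fintype.card W = 2 ^ n := by
  set ψ := Fintype.linearCombination (ZMod 2) e
  have hψ : LinearMap.range ψ = ⊤ := LinearMap.range_eq_top.2 fun w => by
    obtain ⟨i, rfl⟩ := he w
    exact ⟨Pi.single i 1, by simp [ψ]⟩
  have hker : #{x | ψ x = 0} = Nat.card (LinearMap.ker ψ) := by
    rw [← Nat.card_eq_finsetCard]
    exact Nat.card_congr (Equiv.subtypeEquivRight fun x => by simp)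
  have hrank := LinearMap.finrank_range_add_finrank_ker ψ
  rw [hψ, finrank_top, Module.finrank_fin_fun] at hrank
  rw [hker, Module.natCard_eq_pow_finrank (K := ZMod 2), Module.card_eq_pow_finrank (K := ZMod 2),
    Nat.card_zmod, ZMod.card, ← pow_add, add_comm, hrank]

end Domination

/-- For every integer `a ≥ 1`, `γ_{2^a} = 2^(2^a - a)`. -/
theorem stmt_4 (a : ℕ) (ha : 1 ≤ a) : gamma (2 ^ a) = 2 ^ (2 ^ a - a) := by
  have hsplit : 2 ^ (2 ^ a - a) * 2 ^ a = 2 ^ 2 ^ a := pow_sub_mul_pow 2 Nat.lt_two_pow_self.le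
  let e : Fin (2 ^ a) ≃ (Fin a → ZMod 2) := Fintype.equivOfCardEq (by simp)
  have hcode := card_linearCombination_eq_zero_mul_card e.surjective
  rw [Fintype.card_fun, ZMod.card, Fintype.card_fin, ← hsplit] at hcode
  have hmem : 2 ^ (2 ^ a - a) ∈ {k | ∃ Δ : Finset (Fin (2 ^ a) → ZMod 2), IsDominating Δ ∧ #Δ = k} :=
    ⟨_, isDominating_linearCombination_eq_zero e.surjective,
      Nat.eq_of_mul_eq_mul_right (by positivity) hcode⟩
  refine le_antisymm (Nat.sInf_le hmem) (le_csInf ⟨_, hmem⟩ ?_)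
  rintro _ ⟨Δ, hΔ, rfl⟩
  have := hΔ.two_pow_le_mul_card (Nat.even_pow.2 ⟨even_two, by omega⟩) (by positivity)
  rw [← hsplit, mul_comm (2 ^ a)] at this
  exact Nat.le_of_mul_le_mul_right this (by positivity)
end

section
/- For every even integer n ≥ 2, the minimal domination number satisfies γ_n ≥ 2^n / n, i.e., n · γ_n ≥ 2^n. -/
open Finset

namespace VW

/-- evenness via fixed-point-free involution -/
lemma even_card_of_invol {α : Type*} [DecidableEq α] (σ : α → α) (hσ : ∀ x, σ (σ x) = x)
    (S : Finset α) (hmap : ∀ x ∈ S, σ x ∈ S) (hfix : ∀ x ∈ S, σ x ≠ x) : Even S.card := by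
  induction S using Finset.strongInduction with
  | _ S ih =>
    rcases S.eq_empty_or_nonempty with rfl | ⟨a, ha⟩
    · simp
    · have hsa : σ a ∈ S := hmap a ha
      have hane : σ a ≠ a := hfix a ha
      have hpair : ({a, σ a} : Finset α) ⊆ S := by
        intro x hx; rcases Finset.mem_insert.mp hx with rfl | hx
        · exact ha
        · rw [Finset.mem_singleton.mp hx]; exact hsa
      have hssub : S \ {a, σ a} ⊂ S :=
        Finset.sdiff_ssubset hpair ⟨a, Finset.mem_insert_self _ _⟩
      have h1 : ∀ x ∈ S \ {a, σ a}, σ x ∈ S \ {a, σ a} := by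
        intro x hx
        rw [Finset.mem_sdiff] at hx ⊢
        refine ⟨hmap x hx.1, ?_⟩
        intro hmem
        apply hx.2
        rcases Finset.mem_insert.mp hmem with h | h
        · rw [Finset.mem_insert]; right; rw [Finset.mem_singleton, ← h, hσ]
        · rw [Finset.mem_singleton] at h
          rw [Finset.mem_insert]; left
          have := congrArg σ h; rwa [hσ, hσ] at this
      have h2 : ∀ x ∈ S \ {a, σ a}, σ x ≠ x := fun x hx => hfix x (Finset.mem_sdiff.mp hx).1
      have heven := ih _ hssub h1 h2
      have hcard : (S \ {a, σ a}).card + 2 = S.card := by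
        rw [← Finset.card_sdiff_add_card_eq_card hpair, Finset.card_pair (Ne.symm hane)]
      rw [← hcard]
      exact heven.add (Even.add_self 1)

variable {n : ℕ}

def ball (z : Fin n → ZMod 2) : Finset (Fin n → ZMod 2) :=
  {y | hammingDist z y ≤ 1}

lemma mem_ball {z y : Fin n → ZMod 2} : y ∈ ball z ↔ hammingDist z y ≤ 1 := by
  simp [ball]

lemma mem_ball_comm {z y : Fin n → ZMod 2} : y ∈ ball z ↔ z ∈ ball y := by
  rw [mem_ball, mem_ball, hammingDist_comm]

lemma zmod2_ne {a b : ZMod 2} : a ≠ b ↔ b = a + 1 := by revert a b; decide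

lemma card_ball (z : Fin n → ZMod 2) : (ball z).card = n + 1 := by
  have h : ball z = insert z ((univ : Finset (Fin n)).image
      (fun i => Function.update z i (z i + 1))) := by
    ext y
    rw [mem_ball, Finset.mem_insert, Finset.mem_image]
    constructor
    · intro hy
      interval_cases h : hammingDist z y
      · left; exact (hammingDist_eq_zero.mp h).symm
      · right
        rw [hammingDist, Finset.card_eq_one] at h
        obtain ⟨i, hi⟩ := h
        refine ⟨i, Finset.mem_univ i, ?_⟩
        have hi' : ∀ j, z j ≠ y j ↔ j = i := by
          intro j
          rw [← Finset.mem_singleton, ← hi]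
          simp
        funext j
        by_cases hji : j = i
        · subst hji
          have : z j ≠ y j := (hi' j).mpr rfl
          rw [Function.update_self]
          exact (zmod2_ne.mp this).symm
        · rw [Function.update_of_ne hji]
          by_contra hne
          exact hji ((hi' j).mp hne)
    · rintro (rfl | ⟨i, -, rfl⟩)
      · simp
      · have : hammingDist z (Function.update z i (z i + 1)) = 1 := by
          have hone : ∀ a : ZMod 2, a ≠ a + 1 := by decide
          unfold hammingDist
          rw [Finset.card_eq_one]
          refine ⟨i, ?_⟩
          ext j
          simp only [Finset.mem_filter, Finset.mem_univ, true_and, Finset.mem_singleton]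
          constructor
          · intro hj; by_contra hji; exact hj (by rw [Function.update_of_ne hji])
          · rintro rfl; rw [Function.update_self]; exact hone _
        rw [this]
  rw [h]
  have hone : ∀ a : ZMod 2, a + 1 ≠ a := by decide
  have hinj : Set.InjOn (fun i => Function.update z i (z i + 1)) (univ : Finset (Fin n)) := by
    intro i _ j _ hij
    by_contra hne
    have := congrFun hij i
    dsimp only at this
    rw [Function.update_self, Function.update_of_ne hne] at this
    exact hone _ this
  rw [Finset.card_insert_of_notMem, Finset.card_image_of_injOn hinj, Finset.card_univ,
    Fintype.card_fin]
  intro hmem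
  obtain ⟨i, -, hi⟩ := Finset.mem_image.mp hmem
  have := congrFun hi i
  rw [Function.update_self] at this
  exact hone _ this

lemma dist_add_left (a x y : Fin n → ZMod 2) :
    hammingDist (a + x) (a + y) = hammingDist x y := by
  simp [hammingDist, Pi.add_apply, add_right_inj]

lemma even_inter {c z : Fin n → ZMod 2} (h : c ≠ z) : Even ((ball c ∩ ball z).card) := by
  have key : ∀ a b x : ZMod 2, a + b + (a + b + x) = x := by decide
  have key2 : ∀ a b : ZMod 2, a + (a + b) = b := by decide
  have hσ : ∀ w : Fin n → ZMod 2, (c + z) + ((c + z) + w) = w := by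
    intro w; funext i; exact key (c i) (z i) (w i)
  have hdc : ∀ x : Fin n → ZMod 2, hammingDist c (c + z + x) = hammingDist z x := by
    intro x
    have h4 : z + (z + x) = x := by funext i; exact key2 (z i) (x i)
    calc hammingDist c (c + z + x) = hammingDist (c + 0) (c + (z + x)) := by
            rw [add_zero, add_assoc]
      _ = hammingDist 0 (z + x) := dist_add_left _ _ _
      _ = hammingDist (z + 0) (z + (z + x)) := (dist_add_left _ _ _).symm
      _ = hammingDist z x := by rw [add_zero, h4]
  have hdz : ∀ x : Fin n → ZMod 2, hammingDist z (c + z + x) = hammingDist c x := by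
    intro x
    have h1 : c + z + x = z + (c + x) := by ring
    have h4 : c + (c + x) = x := by funext i; exact key2 (c i) (x i)
    calc hammingDist z (c + z + x) = hammingDist (z + 0) (z + (c + x)) := by
            rw [add_zero, h1]
      _ = hammingDist 0 (c + x) := dist_add_left _ _ _
      _ = hammingDist (c + 0) (c + (c + x)) := (dist_add_left _ _ _).symm
      _ = hammingDist c x := by rw [add_zero, h4]
  apply even_card_of_invol (fun w => c + z + w) hσ
  · intro x hx
    rw [Finset.mem_inter, mem_ball, mem_ball] at hx ⊢
    exact ⟨by rw [hdc]; exact hx.2, by rw [hdz]; exact hx.1⟩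
  · intro x _ hfx
    apply h
    funext i
    have := congrFun hfx i
    simp only [Pi.add_apply] at this
    revert this
    generalize c i = a; generalize z i = b; generalize x i = w
    revert a b w; decide

/-- number of codewords covering `y` -/
def f (Δ : Finset (Fin n → ZMod 2)) (y : Fin n → ZMod 2) : ℕ :=
  (Δ.filter (fun c => y ∈ ball c)).card

lemma one_le_f {Δ : Finset (Fin n → ZMod 2)} (hdom : IsDominating Δ) (y : Fin n → ZMod 2) :
    1 ≤ f Δ y := by
  obtain ⟨x, hx, hxy⟩ := hdom y
  refine Finset.card_pos.mpr ⟨x, Finset.mem_filter.mpr ⟨hx, mem_ball.mpr hxy⟩⟩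

lemma filter_univ_ball (y : Fin n → ZMod 2) :
    ((univ : Finset (Fin n → ZMod 2)).filter (fun z => y ∈ ball z)) = ball y := by
  ext z
  simp only [Finset.mem_filter, Finset.mem_univ, true_and]
  exact mem_ball_comm.symm

lemma f_add_count (Δ : Finset (Fin n → ZMod 2)) (y : Fin n → ZMod 2) :
    f Δ y + (Δᶜ.filter (fun z => y ∈ ball z)).card = n + 1 := by
  have hU : Δ ∪ Δᶜ = (univ : Finset (Fin n → ZMod 2)) := by
    simp [Finset.union_comm]
  have hdisj : Disjoint (Δ.filter (fun z => y ∈ ball z)) (Δᶜ.filter (fun z => y ∈ ball z)) :=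
    Finset.disjoint_filter_filter disjoint_compl_right
  have := Finset.card_union_of_disjoint hdisj
  rw [← Finset.filter_union, hU, filter_univ_ball, card_ball] at this
  exact this.symm

lemma sum_f_ball (Δ : Finset (Fin n → ZMod 2)) (z : Fin n → ZMod 2) :
    ∑ y ∈ ball z, f Δ y = ∑ c ∈ Δ, (ball c ∩ ball z).card := by
  unfold f
  simp_rw [Finset.card_filter]
  rw [Finset.sum_comm]
  congr 1
  funext c
  rw [← Finset.card_filter]
  congr 1
  ext y
  simp [Finset.mem_inter, Finset.mem_filter, and_comm]

lemma sum_f_univ (Δ : Finset (Fin n → ZMod 2)) :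
    ∑ y ∈ (univ : Finset (Fin n → ZMod 2)), f Δ y = Δ.card * (n + 1) := by
  unfold f
  simp_rw [Finset.card_filter]
  rw [Finset.sum_comm]
  have h : ∀ c ∈ Δ, (∑ y ∈ (univ : Finset (Fin n → ZMod 2)),
      if y ∈ ball c then (1 : ℕ) else 0) = n + 1 := by
    intro c _
    rw [← Finset.card_filter]
    have : (univ : Finset (Fin n → ZMod 2)).filter (fun y => y ∈ ball c) = ball c := by
      ext y; simp
    rw [this, card_ball]
  rw [Finset.sum_congr rfl h, Finset.sum_const, smul_eq_mul]

lemma key_sum {Δ : Finset (Fin n → ZMod 2)} (hdom : IsDominating Δ) (heven : Even n)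
    {z : Fin n → ZMod 2} (hz : z ∉ Δ) : n + 2 ≤ ∑ y ∈ ball z, f Δ y := by
  have heq := sum_f_ball Δ z
  have hdvd : 2 ∣ ∑ y ∈ ball z, f Δ y := by
    rw [heq]
    refine Finset.dvd_sum ?_
    intro c hc
    exact (even_inter (show c ≠ z from fun h => hz (by rwa [h] at hc))).two_dvd
  have hge : n + 1 ≤ ∑ y ∈ ball z, f Δ y := by
    calc n + 1 = ∑ _y ∈ ball z, 1 := by rw [Finset.sum_const, smul_eq_mul, mul_one, card_ball]
      _ ≤ ∑ y ∈ ball z, f Δ y := Finset.sum_le_sum (fun y _ => one_le_f hdom y)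
  rcases Nat.eq_or_lt_of_le hge with h | h
  · exfalso
    rw [← h] at hdvd
    obtain ⟨k, hk⟩ := heven
    omega
  · omega

lemma card_univ_cube : Fintype.card (Fin n → ZMod 2) = 2 ^ n := by
  simp

lemma main {Δ : Finset (Fin n → ZMod 2)} (hdom : IsDominating Δ) (hn : 2 ≤ n)
    (heven : Even n) : 2 ^ n ≤ n * Δ.card := by
  set γ : ℤ := (Δ.card : ℤ) with hγ
  set g : (Fin n → ZMod 2) → ℤ := fun y => (f Δ y : ℤ) - 1 with hg
  have hcard : ((univ : Finset (Fin n → ZMod 2)).card : ℤ) = 2 ^ n := by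
    rw [Finset.card_univ, card_univ_cube]; push_cast; ring
  have hsumg : ∑ y ∈ (univ : Finset (Fin n → ZMod 2)), g y = (n + 1) * γ - 2 ^ n := by
    rw [hg]
    rw [Finset.sum_sub_distrib, Finset.sum_const, nsmul_eq_mul, mul_one, hcard]
    have := sum_f_univ Δ
    have h2 : ∑ y ∈ (univ : Finset (Fin n → ZMod 2)), ((f Δ y : ℤ))
        = ((∑ y ∈ (univ : Finset (Fin n → ZMod 2)), f Δ y : ℕ) : ℤ) := by push_cast; ring
    rw [h2, this]; push_cast; ring
  -- swap sum
  have hswap : ∑ z ∈ Δᶜ, ∑ y ∈ ball z, g y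
      = ∑ y ∈ (univ : Finset (Fin n → ZMod 2)),
          ((Δᶜ.filter (fun z => y ∈ ball z)).card : ℤ) * g y := by
    have h1 : ∀ z : Fin n → ZMod 2, ∑ y ∈ ball z, g y
        = ∑ y ∈ (univ : Finset (Fin n → ZMod 2)), if y ∈ ball z then g y else 0 := by
      intro z
      rw [← Finset.sum_filter]
      congr 1
      ext y; simp
    calc ∑ z ∈ Δᶜ, ∑ y ∈ ball z, g y
        = ∑ z ∈ Δᶜ, ∑ y ∈ (univ : Finset (Fin n → ZMod 2)),
            if y ∈ ball z then g y else 0 := Finset.sum_congr rfl (fun z _ => h1 z)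
      _ = ∑ y ∈ (univ : Finset (Fin n → ZMod 2)), ∑ z ∈ Δᶜ,
            if y ∈ ball z then g y else 0 := Finset.sum_comm
      _ = ∑ y ∈ (univ : Finset (Fin n → ZMod 2)),
            ((Δᶜ.filter (fun z => y ∈ ball z)).card : ℤ) * g y := by
          refine Finset.sum_congr rfl (fun y _ => ?_)
          rw [Finset.sum_ite, Finset.sum_const, Finset.sum_const, smul_zero, add_zero,
            nsmul_eq_mul]
  -- lower bound on the swapped sum
  have hcompl : ((Δᶜ : Finset (Fin n → ZMod 2)).card : ℤ) = 2 ^ n - γ := by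
    rw [Finset.card_compl, card_univ_cube]
    have hle : Δ.card ≤ 2 ^ n := by
      rw [← card_univ_cube, ← Finset.card_univ]; exact Finset.card_le_card (Finset.subset_univ _)
    push_cast [Nat.cast_sub hle]; ring
  have hlow : 2 ^ n - γ ≤ ∑ z ∈ Δᶜ, ∑ y ∈ ball z, g y := by
    rw [← hcompl]
    calc ((Δᶜ : Finset (Fin n → ZMod 2)).card : ℤ) = ∑ _z ∈ Δᶜ, (1 : ℤ) := by
          rw [Finset.sum_const, nsmul_eq_mul, mul_one]
      _ ≤ ∑ z ∈ Δᶜ, ∑ y ∈ ball z, g y := by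
          refine Finset.sum_le_sum (fun z hz => ?_)
          have hz' : z ∉ Δ := Finset.mem_compl.mp hz
          have hk := key_sum hdom heven hz'
          have hsum : ∑ y ∈ ball z, g y = (∑ y ∈ ball z, (f Δ y : ℤ)) - (n + 1) := by
            rw [hg, Finset.sum_sub_distrib, Finset.sum_const, nsmul_eq_mul, mul_one, card_ball]
            push_cast; ring
          have hcast : ((n : ℤ) + 2) ≤ ∑ y ∈ ball z, (f Δ y : ℤ) := by
            exact_mod_cast hk
          rw [hsum]; linarith
  -- upper bound
  have hcnt : ∀ y : Fin n → ZMod 2,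
      ((Δᶜ.filter (fun z => y ∈ ball z)).card : ℤ) = (n : ℤ) - g y := by
    intro y
    have := f_add_count Δ y
    have h' : ((f Δ y : ℤ)) + ((Δᶜ.filter (fun z => y ∈ ball z)).card : ℤ) = (n : ℤ) + 1 := by
      exact_mod_cast congrArg (fun k : ℕ => (k : ℤ)) this
    simp only [hg]; linarith
  have hgnonneg : ∀ y, 0 ≤ g y := by
    intro y
    have h1 := one_le_f hdom y
    simp only [hg]
    have h2 : (1 : ℤ) ≤ (f Δ y : ℤ) := by exact_mod_cast h1
    linarith
  have hub : ∑ y ∈ (univ : Finset (Fin n → ZMod 2)),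
      ((Δᶜ.filter (fun z => y ∈ ball z)).card : ℤ) * g y
      ≤ ((n : ℤ) - 1) * ((n + 1) * γ - 2 ^ n) := by
    calc ∑ y ∈ (univ : Finset (Fin n → ZMod 2)),
          ((Δᶜ.filter (fun z => y ∈ ball z)).card : ℤ) * g y
        ≤ ∑ y ∈ (univ : Finset (Fin n → ZMod 2)), ((n : ℤ) - 1) * g y := by
          refine Finset.sum_le_sum (fun y _ => ?_)
          rw [hcnt y]
          have hquad : 0 ≤ g y * (g y - 1) := by
            rcases le_or_gt (g y) 0 with h | h
            · nlinarith [sq_nonneg (g y)]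
            · have h1 : 1 ≤ g y := h
              exact mul_nonneg (by linarith) (by linarith)
          nlinarith
      _ = ((n : ℤ) - 1) * ((n + 1) * γ - 2 ^ n) := by
          rw [← Finset.mul_sum, hsumg]
  have hchain : 2 ^ n - γ ≤ ((n : ℤ) - 1) * ((n + 1) * γ - 2 ^ n) := by
    calc (2 : ℤ) ^ n - γ ≤ ∑ z ∈ Δᶜ, ∑ y ∈ ball z, g y := hlow
      _ = _ := hswap
      _ ≤ ((n : ℤ) - 1) * ((n + 1) * γ - 2 ^ n) := hub
  have hfinal : (2 : ℤ) ^ n ≤ (n : ℤ) * γ := by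
    have hn' : (2 : ℤ) ≤ (n : ℤ) := by exact_mod_cast hn
    nlinarith [hchain]
  have : (2 : ℤ) ^ n ≤ ((n * Δ.card : ℕ) : ℤ) := by push_cast; exact hfinal
  exact_mod_cast this

end VW

/-- For every even `n ≥ 2`, `n * γ_n ≥ 2^n` (i.e. `γ_n ≥ 2^n / n`). -/
theorem stmt_7 (n : ℕ) (hn : 2 ≤ n) (heven : Even n) : 2 ^ n ≤ n * gamma n := by
  have hne : {k | ∃ Δ : Finset (Fin n → ZMod 2), IsDominating Δ ∧ Δ.card = k}.Nonempty := by
    refine ⟨(univ : Finset (Fin n → ZMod 2)).card, univ, ?_, rfl⟩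
    intro y
    exact ⟨y, Finset.mem_univ y, by simp⟩
  obtain ⟨Δ, hdom, hcard⟩ := Nat.sInf_mem hne
  rw [gamma, ← hcard] at *
  exact VW.main hdom hn heven
end

section
/- For all integers p, q with 1 ≤ q ≤ p, the maximum sizes of 3-separated sets satisfy λ(p + q) ≥ 2^(q − 1) · λ(p). -/
open Finset

/-- `λ(n)`: the maximum cardinality of a 3-separated subset of `Q_n`
(a set in which any two distinct elements have Hamming distance at least 3). -/
noncomputable def lambda (n : ℕ) : ℕ :=
  sSup {k | ∃ D : Finset (Fin n → ZMod 2),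
    (∀ x ∈ D, ∀ y ∈ D, x ≠ y → 3 ≤ hammingDist x y) ∧ D.card = k}

section aux

lemma lambda_bdd (n : ℕ) : BddAbove {k | ∃ D : Finset (Fin n → ZMod 2),
    (∀ x ∈ D, ∀ y ∈ D, x ≠ y → 3 ≤ hammingDist x y) ∧ D.card = k} := by
  refine ⟨2 ^ n, fun k hk => ?_⟩
  obtain ⟨D, -, rfl⟩ := hk
  calc D.card ≤ Fintype.card (Fin n → ZMod 2) := D.card_le_univ
    _ = 2 ^ n := by simp

lemma le_lambda {n : ℕ} (D : Finset (Fin n → ZMod 2))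
    (h : ∀ x ∈ D, ∀ y ∈ D, x ≠ y → 3 ≤ hammingDist x y) : D.card ≤ lambda n :=
  le_csSup (lambda_bdd n) ⟨D, h, rfl⟩

lemma lambda_spec (n : ℕ) : ∃ D : Finset (Fin n → ZMod 2),
    (∀ x ∈ D, ∀ y ∈ D, x ≠ y → 3 ≤ hammingDist x y) ∧ D.card = lambda n := by
  have hne : {k | ∃ D : Finset (Fin n → ZMod 2),
      (∀ x ∈ D, ∀ y ∈ D, x ≠ y → 3 ≤ hammingDist x y) ∧ D.card = k}.Nonempty :=
    ⟨0, ∅, by simp, rfl⟩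
  exact Nat.sSup_mem hne (lambda_bdd n)

/-- embedding of `Fin q → ZMod 2` into the first `q` coordinates of `Fin p → ZMod 2`. -/
def emb (q p : ℕ) (v : Fin q → ZMod 2) : Fin p → ZMod 2 :=
  fun j => if h : (j : ℕ) < q then v ⟨j, h⟩ else 0

lemma emb_add (q p : ℕ) (v w : Fin q → ZMod 2) :
    emb q p (v + w) = emb q p v + emb q p w := by
  funext j; simp only [emb, Pi.add_apply]; split <;> simp

lemma emb_inj {q p : ℕ} (hpq : q ≤ p) {v w : Fin q → ZMod 2}
    (h : emb q p v = emb q p w) : v = w := by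
  funext i
  have := congrFun h (Fin.castLE hpq i)
  simpa [emb, i.2] using this

lemma hd_sum_s14 {n : ℕ} (x y : Fin n → ZMod 2) :
    hammingDist x y = ∑ i, if x i ≠ y i then 1 else 0 := by
  rw [hammingDist, Finset.card_filter]

lemma hd_append (p q : ℕ) (a c : Fin p → ZMod 2) (b d : Fin q → ZMod 2) :
    hammingDist (Fin.append a b) (Fin.append c d) = hammingDist a c + hammingDist b d := by
  simp only [hd_sum_s14, Fin.sum_univ_add, Fin.append_left, Fin.append_right]

lemma hd_add_right {n : ℕ} (a b c : Fin n → ZMod 2) :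
    hammingDist (a + c) (b + c) = hammingDist a b := by
  simp [hammingDist, Pi.add_apply]

lemma hd_cast {n : ℕ} (x y : Fin n → ZMod 2) :
    ((hammingDist x y : ℕ) : ZMod 2) = ∑ i, (x i + y i) := by
  rw [hd_sum_s14, Nat.cast_sum]
  refine Finset.sum_congr rfl fun i _ => ?_
  have : ∀ a b : ZMod 2, ((if a ≠ b then (1:ℕ) else 0 : ℕ) : ZMod 2) = a + b := by decide
  exact this (x i) (y i)

/-- parity: two distinct even-weight words are at distance ≥ 2. -/
lemma two_le_hd {q : ℕ} {v w : Fin q → ZMod 2} (hv : ∑ i, v i = 0)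
    (hw : ∑ i, w i = 0) (hne : v ≠ w) : 2 ≤ hammingDist v w := by
  have h2 : (2 : ℕ) ∣ hammingDist v w := by
    rw [← ZMod.natCast_eq_zero_iff, hd_cast, Finset.sum_add_distrib, hv, hw, add_zero]
  have h1 : 0 < hammingDist v w := hammingDist_pos.mpr hne
  omega

lemma hd_emb {q p : ℕ} (hpq : q ≤ p) (x : Fin p → ZMod 2) (v w : Fin q → ZMod 2) :
    hammingDist (x + emb q p v) (x + emb q p w) = hammingDist v w := by
  rw [hammingDist, hammingDist]
  symm
  refine Finset.card_bij (fun i _ => Fin.castLE hpq i) ?_ ?_ ?_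
  · intro i hi
    simp only [mem_filter, mem_univ, true_and] at hi ⊢
    simpa [emb, Fin.ext_iff, show ((Fin.castLE hpq i : Fin p) : ℕ) < q from i.2,
      Fin.eta] using hi
  · intro i _ j _ h
    exact Fin.castLE_injective hpq h
  · intro j hj
    simp only [mem_filter, mem_univ, true_and, Pi.add_apply] at hj
    have hj' : emb q p v j ≠ emb q p w j := fun h => hj (by rw [h])
    have hlt : (j : ℕ) < q := by
      by_contra h
      simp [emb, h] at hj'
    refine ⟨⟨j, hlt⟩, ?_, ?_⟩
    · simp only [mem_filter, mem_univ, true_and]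
      simpa [emb, hlt] using hj'
    · exact Fin.ext rfl

lemma card_even (q : ℕ) (hq : 1 ≤ q) :
    (univ.filter (fun v : Fin q → ZMod 2 => ∑ i, v i = 0)).card = 2 ^ (q - 1) := by
  obtain ⟨z⟩ : Nonempty (Fin q) := ⟨⟨0, hq⟩⟩
  have key : (univ.filter (fun v : Fin q → ZMod 2 => ∑ i, v i = 0)).card =
      (univ.filter (fun v : Fin q → ZMod 2 => ¬ ∑ i, v i = 0)).card := by
    refine Finset.card_bij (fun v _ => v + Pi.single z 1) ?_ ?_ ?_
    · intro v hv
      simp only [mem_filter, mem_univ, true_and, Pi.add_apply] at hv ⊢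
      rw [Finset.sum_add_distrib, hv, zero_add]
      simp [Finset.sum_pi_single']
    · intro a _ b _ h
      exact add_right_cancel h
    · intro w hw
      simp only [mem_filter, mem_univ, true_and] at hw
      refine ⟨w + Pi.single z 1, ?_, ?_⟩
      · simp only [mem_filter, mem_univ, true_and, Pi.add_apply]
        rw [Finset.sum_add_distrib]
        simp only [Finset.sum_pi_single', mem_univ, if_true]
        revert hw; generalize (∑ i, w i) = a; revert a; decide
      · show w + Pi.single z 1 + Pi.single z 1 = w
        rw [add_assoc]
        have : (Pi.single z 1 + Pi.single z 1 : Fin q → ZMod 2) = 0 := by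
          funext i; by_cases h : i = z <;> simp [h]
          decide
        rw [this, add_zero]
  have htot : (univ.filter (fun v : Fin q → ZMod 2 => ∑ i, v i = 0)).card +
      (univ.filter (fun v : Fin q → ZMod 2 => ¬ ∑ i, v i = 0)).card =
      (univ : Finset (Fin q → ZMod 2)).card :=
    Finset.card_filter_add_card_filter_not _
  have hcard : Fintype.card (Fin q → ZMod 2) = 2 ^ q := by simp
  have hq' : 2 ^ q = 2 * 2 ^ (q - 1) := by
    conv_lhs => rw [← Nat.succ_pred_eq_of_pos hq]
    rw [pow_succ, mul_comm, Nat.pred_eq_sub_one]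
  rw [← key, Finset.card_univ, hcard, ← two_mul, hq'] at htot
  exact Nat.eq_of_mul_eq_mul_left (by norm_num) htot

end aux

/-- For all integers `1 ≤ q ≤ p`, `λ(p+q) ≥ 2^(q-1) · λ(p)`. -/
theorem stmt_14 (p q : ℕ) (hq : 1 ≤ q) (hpq : q ≤ p) :
    2 ^ (q - 1) * lambda p ≤ lambda (p + q) := by
  obtain ⟨D, hD, hDcard⟩ := lambda_spec p
  set E : Finset (Fin q → ZMod 2) := univ.filter (fun v => ∑ i, v i = 0) with hE
  set F : (Fin p → ZMod 2) × (Fin q → ZMod 2) → (Fin (p + q) → ZMod 2) :=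
    fun z => Fin.append (z.1 + emb q p z.2) z.2 with hF
  have hFinj : Function.Injective F := by
    intro ⟨x, v⟩ ⟨x', v'⟩ h
    simp only [hF] at h
    have hv : v = v' := by
      funext i
      have := congrFun h (Fin.natAdd p i)
      simpa [Fin.append_right] using this
    subst hv
    have hx : x = x' := by
      funext i
      have := congrFun h (Fin.castAdd q i)
      simp only [Fin.append_left, Pi.add_apply] at this
      exact add_right_cancel this
    simp [hx]
  set D' : Finset (Fin (p + q) → ZMod 2) := (D ×ˢ E).image F with hD'
  have hsep : ∀ x ∈ D', ∀ y ∈ D', x ≠ y → 3 ≤ hammingDist x y := by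
    intro a ha b hb hab
    simp only [hD', Finset.mem_image] at ha hb
    obtain ⟨⟨x, v⟩, hxv, rfl⟩ := ha
    obtain ⟨⟨x', v'⟩, hxv', rfl⟩ := hb
    rw [Finset.mem_product] at hxv hxv'
    obtain ⟨hxD, hvE⟩ := hxv
    obtain ⟨hxD', hvE'⟩ := hxv'
    simp only [hE, mem_filter] at hvE hvE'
    have hdist : hammingDist (F (x, v)) (F (x', v')) =
        hammingDist (x + emb q p v) (x' + emb q p v') + hammingDist v v' :=
      hd_append p q _ _ _ _
    rw [hdist]
    by_cases hvv : v = v'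
    · subst hvv
      have hxx : x ≠ x' := fun h => hab (by rw [h])
      rw [hd_add_right]
      have := hD x hxD x' hxD' hxx
      omega
    · have h2 : 2 ≤ hammingDist v v' := two_le_hd hvE.2 hvE'.2 hvv
      by_cases hfst : x + emb q p v = x' + emb q p v'
      · -- then hammingDist x x' = hammingDist v v' ≥ 3
        have hxx : x ≠ x' := by
          intro h
          subst h
          exact hvv (emb_inj hpq (add_left_cancel hfst))
        have heq : hammingDist x x' = hammingDist v' v := by
          calc hammingDist x x' = hammingDist (x + emb q p v') (x' + emb q p v') :=
                (hd_add_right x x' (emb q p v')).symm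
            _ = hammingDist (x + emb q p v') (x + emb q p v) := by rw [hfst]
            _ = hammingDist v' v := hd_emb hpq x v' v
        have h3 := hD x hxD x' hxD' hxx
        rw [heq, hammingDist_comm] at h3
        omega
      · have h1 : 0 < hammingDist (x + emb q p v) (x' + emb q p v') :=
          hammingDist_pos.mpr hfst
        omega
  have hcard : D'.card = 2 ^ (q - 1) * lambda p := by
    rw [hD', Finset.card_image_of_injective _ hFinj, Finset.card_product, hDcard,
      hE, card_even q hq, mul_comm]
  calc 2 ^ (q - 1) * lambda p = D'.card := hcard.symm
    _ ≤ lambda (p + q) := le_lambda D' hsep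
end

section
/- For every integer n ≥ 1: λ(n) ≥ 2^(n − n̂ − 1) if ň > 0, and λ(n) = 2^(n − n̂) if ň = 0 (equivalently, λ(n) ≥ 2^(n − n̂ − [ň > 0]) with equality when ň = 0). -/
open Finset

variable {ι : Type*}

def IsThreeSeparated [Fintype ι] (D : Finset (ι → ZMod 2)) : Prop :=
  ∀ x ∈ D, ∀ y ∈ D, x ≠ y → 3 ≤ hammingDist x y

section UnitBall

variable [DecidableEq ι]

/-- The words at distance at most `1` from `0`, indexed by the flipped coordinate, if any. -/
def unitBall : Option ι → (ι → ZMod 2)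
  | none => 0
  | some i => Pi.single i 1

lemma unitBall_injective : Function.Injective (unitBall (ι := ι)) := by
  have single_ne_zero (i : ι) : (Pi.single i 1 : ι → ZMod 2) ≠ 0 :=
    fun h => one_ne_zero (α := ZMod 2) (by simpa using congrFun h i)
  rintro (_ | i) (_ | j) h
  · rfl
  · exact absurd h.symm (single_ne_zero j)
  · exact absurd h (single_ne_zero i)
  · simpa [unitBall, Pi.single_apply] using congrFun h i

variable [Fintype ι]

lemma hammingNorm_single_le {β : ι → Type*} [∀ i, DecidableEq (β i)] [∀ i, Zero (β i)]
    (i : ι) (a : β i) : hammingNorm (Pi.single i a) ≤ 1 :=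
  calc hammingNorm (Pi.single i a) ≤ #{i} := card_le_card fun j hj => by
        by_contra hji
        exact (mem_filter.1 hj).2 (Pi.single_eq_of_ne (mem_singleton.not.1 hji) a)
    _ = 1 := card_singleton i

lemma hammingNorm_unitBall_le (o : Option ι) : hammingNorm (unitBall o) ≤ 1 := by
  cases o with
  | none => simp [unitBall]
  | some i => exact hammingNorm_single_le i 1

end UnitBall

variable [Fintype ι]

lemma IsThreeSeparated.eq_of_add_eq {D : Finset (ι → ZMod 2)} (hD : IsThreeSeparated D)
    {x y u v : ι → ZMod 2} (hx : x ∈ D) (hy : y ∈ D) (hu : hammingNorm u ≤ 1)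
    (hv : hammingNorm v ≤ 1) (h : x + u = y + v) : x = y := by
  by_contra hxy
  have hdist : hammingDist x y = hammingDist v u := by
    rw [hammingDist_eq_hammingNorm, hammingDist_eq_hammingNorm]
    congr 1
    linear_combination (-1 : ι → ZMod 2) * h
  have htri := hammingDist_triangle v 0 u
  rw [hammingDist_zero_right, hammingDist_zero_left] at htri
  have := hD x hx y hy hxy
  omega

theorem IsThreeSeparated.card_mul_le {D : Finset (ι → ZMod 2)} (hD : IsThreeSeparated D) :
    #D * (Fintype.card ι + 1) ≤ 2 ^ Fintype.card ι := by
  classical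
  let f : D × Option ι → (ι → ZMod 2) := fun p => p.1 + unitBall p.2
  have hf : Function.Injective f := by
    rintro ⟨x, a⟩ ⟨y, b⟩ h
    obtain rfl : x = y := Subtype.ext <|
      hD.eq_of_add_eq x.2 y.2 (hammingNorm_unitBall_le a) (hammingNorm_unitBall_le b) h
    rw [unitBall_injective (add_left_cancel h : unitBall a = unitBall b)]
  simpa [Fintype.card_option] using Fintype.card_le_of_injective f hf

section ParityCheck

variable {V : Type*} [AddCommGroup V] [Module (ZMod 2) V]

omit [Fintype ι] in
lemma three_le_card_of_sum_eq_zero {e : ι → V} (he : Function.Injective e)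
    (he0 : ∀ i, e i ≠ 0) {s : Finset ι} (hs : s.Nonempty) (hsum : ∑ i ∈ s, e i = 0) : 3 ≤ #s := by
  classical
  by_contra! hlt
  obtain hcard | hcard : #s = 1 ∨ #s = 2 := by have := hs.card_pos; omega
  · obtain ⟨i, rfl⟩ := card_eq_one.1 hcard
    exact he0 i (by simpa using hsum)
  · obtain ⟨i, j, hij, rfl⟩ := card_eq_two.1 hcard
    rw [sum_pair hij, add_eq_zero_iff_eq_neg, ZModModule.neg_eq_self] at hsum
    exact hij (he hsum)

lemma linearCombination_eq_sum_support (e : ι → V) (z : ι → ZMod 2) :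
    Fintype.linearCombination (ZMod 2) e z = ∑ i with z i ≠ 0, e i := by
  rw [Fintype.linearCombination_apply, sum_filter]
  refine sum_congr rfl fun i _ => ?_
  split_ifs with hzi
  · have : z i = 1 := Fin.eq_one_of_ne_zero _ hzi
    rw [this, one_smul]
  · rw [not_not.1 hzi, zero_smul]

lemma three_le_hammingNorm_of_linearCombination_eq_zero {e : ι → V}
    (he : Function.Injective e) (he0 : ∀ i, e i ≠ 0) {z : ι → ZMod 2} (hz : z ≠ 0)
    (h : Fintype.linearCombination (ZMod 2) e z = 0) : 3 ≤ hammingNorm z := by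
  rw [linearCombination_eq_sum_support] at h
  exact three_le_card_of_sum_eq_zero he he0
    (filter_nonempty_iff.2 <| by simpa [funext_iff] using hz) h

lemma isThreeSeparated_of_subset_ker {e : ι → V} (he : Function.Injective e)
    (he0 : ∀ i, e i ≠ 0) {D : Finset (ι → ZMod 2)}
    (hD : ∀ x ∈ D, x ∈ LinearMap.ker (Fintype.linearCombination (ZMod 2) e)) :
    IsThreeSeparated D := by
  intro x hx y hy hxy
  rw [hammingDist_eq_hammingNorm]
  have hx0 := LinearMap.mem_ker.1 (hD x hx)
  have hy0 := LinearMap.mem_ker.1 (hD y hy)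
  exact three_le_hammingNorm_of_linearCombination_eq_zero he he0
    (by rwa [neg_add_eq_sub, sub_ne_zero, ne_comm]) (by simp [hx0, hy0])

lemma two_pow_sub_finrank_le_card_ker [Module.Finite (ZMod 2) V]
    (L : (ι → ZMod 2) →ₗ[ZMod 2] V) :
    2 ^ (Fintype.card ι - Module.finrank (ZMod 2) V) ≤ Nat.card (LinearMap.ker L) := by
  rw [Module.natCard_eq_pow_finrank (K := ZMod 2), Nat.card_zmod]
  refine Nat.pow_le_pow_right two_pos ?_
  have hrank := L.finrank_range_add_finrank_ker
  rw [Module.finrank_fintype_fun_eq_card] at hrank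
  have := Submodule.finrank_le (LinearMap.range L)
  omega

end ParityCheck

theorem exists_isThreeSeparated_two_pow_le_card {m : ℕ} (h : Fintype.card ι + 1 ≤ 2 ^ m) :
    ∃ D : Finset (ι → ZMod 2), IsThreeSeparated D ∧ 2 ^ (Fintype.card ι - m) ≤ #D := by
  classical
  obtain ⟨e⟩ : Nonempty (ι ↪ {v : Fin m → ZMod 2 // v ≠ 0}) := by
    rw [Function.Embedding.nonempty_iff_card_le, Fintype.card_subtype_compl]
    simpa using Nat.le_sub_one_of_lt h
  let c : ι → Fin m → ZMod 2 := fun i => e i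
  let L := Fintype.linearCombination (ZMod 2) c
  refine ⟨(LinearMap.ker L : Set (ι → ZMod 2)).toFinset,
    isThreeSeparated_of_subset_ker (e := c) (Subtype.val_injective.comp e.injective)
      (fun i => (e i).2) fun x hx => by simpa using hx, ?_⟩
  rw [← Nat.card_eq_card_toFinset]
  simpa using two_pow_sub_finrank_le_card_ker L

lemma bddAbove_lambda_set (n : ℕ) : BddAbove {k | ∃ D : Finset (Fin n → ZMod 2),
    IsThreeSeparated D ∧ #D = k} := by
  refine ⟨2 ^ n, ?_⟩
  rintro _ ⟨D, -, rfl⟩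
  simpa using card_le_univ D

lemma IsThreeSeparated.card_le_lambda {n : ℕ} {D : Finset (Fin n → ZMod 2)}
    (hD : IsThreeSeparated D) : #D ≤ lambda n :=
  le_csSup (bddAbove_lambda_set n) ⟨D, hD, rfl⟩

lemma lambda_mul_le (n : ℕ) : lambda n * (n + 1) ≤ 2 ^ n := by
  refine (Nat.le_div_iff_mul_le n.succ_pos).1 (csSup_le ⟨0, ∅, by simp⟩ ?_)
  rintro _ ⟨D, hD, rfl⟩
  exact (Nat.le_div_iff_mul_le n.succ_pos).2 (by simpa using IsThreeSeparated.card_mul_le hD)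

lemma two_pow_sub_le_lambda {n m : ℕ} (h : n + 1 ≤ 2 ^ m) : 2 ^ (n - m) ≤ lambda n := by
  obtain ⟨D, hD, hcard⟩ :=
    exists_isThreeSeparated_two_pow_le_card (ι := Fin n) (by simpa using h)
  simpa using hcard.trans hD.card_le_lambda

theorem stmt_15_general (n : ℕ) :
    (0 < n + 1 - 2 ^ Nat.log 2 (n + 1) →
      2 ^ (n - Nat.log 2 (n + 1) - 1) ≤ lambda n) ∧
    (n + 1 - 2 ^ Nat.log 2 (n + 1) = 0 →
      lambda n = 2 ^ (n - Nat.log 2 (n + 1))) := by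
  set l := Nat.log 2 (n + 1)
  have hl : 2 ^ l ≤ n + 1 := Nat.pow_log_le_self 2 n.succ_ne_zero
  refine ⟨fun _ => ?_, fun h0 => ?_⟩
  · rw [Nat.sub_sub]
    exact two_pow_sub_le_lambda (Nat.lt_pow_succ_log_self one_lt_two _).le
  · have hn : n + 1 = 2 ^ l := by omega
    have hln : l ≤ n := by have := Nat.lt_two_pow_self (n := l); omega
    refine le_antisymm ?_ (two_pow_sub_le_lambda hn.le)
    have hpack := lambda_mul_le n
    rw [hn, ← pow_sub_mul_pow 2 hln] at hpack
    exact Nat.le_of_mul_le_mul_right hpack (by positivity)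

/-- For `n ≥ 1`, writing `n = 2^n̂ - 1 + ň` with `n̂ = ⌊log₂(n+1)⌋` and
`ň = n + 1 - 2^n̂`: if `ň > 0` then `λ(n) ≥ 2^(n - n̂ - 1)`, and if `ň = 0`
then `λ(n) = 2^(n - n̂)`. -/
theorem stmt_15 (n : ℕ) (hn : 1 ≤ n) :
    (0 < n + 1 - 2 ^ Nat.log 2 (n + 1) →
      2 ^ (n - Nat.log 2 (n + 1) - 1) ≤ lambda n) ∧
    (n + 1 - 2 ^ Nat.log 2 (n + 1) = 0 →
      lambda n = 2 ^ (n - Nat.log 2 (n + 1))) :=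
  stmt_15_general n
end
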